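/- Let λ = 0 and H_RB = kX_∞ the free Rota-Baxter algebra of weight zero on X. Then for all n ≥ 0, Δ(H^(n)) ⊆ ⊕_{p+q=n} H^(p) ⊗ H^(q); that is, the coproduct Δ respects the total degree grading. -/

import Mathlib

open TensorProduct

universe u v

/-- Letters of Rota-Baxter bracketed words: either a variable from `X` or a
bracketed word `⌊w⌋` (a list of letters). -/
inductive RBL (X : Type u) : Type u
  | var : X → RBL X
  | br : List (RBL X) → RBL X

namespace RBL

variable {X : Type u}

/-- `a.isBr = true` iff the letter `a` is a bracketed element `⌊w⌋ ∈ ⌊X_∞⌋`. -/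
def isBr : RBL X → Bool
  | var _ => false
  | br _ => true

mutual
  /-- Validity of a letter: the inside of a bracket must be a Rota-Baxter bracketed word. -/
  def valid : RBL X → Prop
    | var _ => True
    | br l => wordValid l
  /-- `wordValid l` says that the list of letters `l` is a Rota-Baxter bracketed word,
  i.e. all letters are valid and the letters alternate (no two consecutive brackets). -/
  def wordValid : List (RBL X) → Prop
    | [] => True
    | [a] => valid a
    | a :: b :: l => valid a ∧ ¬(a.isBr = true ∧ b.isBr = true) ∧ wordValid (b :: l)
end

lemma wordValid_nil : wordValid ([] : List (RBL X)) := by simp [wordValid]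

lemma wordValid_var (x : X) : wordValid [var x] := by simp [wordValid, valid]

lemma wordValid_br {l : List (RBL X)} (h : wordValid l) : wordValid [br l] := by
  simpa [wordValid, valid] using h

mutual
  /-- The total degree of a letter. -/
  def degL : RBL X → ℕ
    | var _ => 1
    | br l => degW l + 1
  /-- The total degree of a word: the number of occurrences of brackets (i.e. of `P`)
  plus the number of occurrences of letters of `X`. -/
  def degW : List (RBL X) → ℕ
    | [] => 0
    | a :: l => degL a + degW l
end

end RBL

/-- The set `X_∞` of Rota-Baxter bracketed words on `X`. -/
def RBWord (X : Type u) : Type u := {l : List (RBL X) // RBL.wordValid l}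

namespace RBWord

variable {X : Type u}

/-- The empty word `1`. -/
def one : RBWord X := ⟨[], RBL.wordValid_nil⟩

/-- The total degree of a Rota-Baxter bracketed word. -/
def deg (w : RBWord X) : ℕ := RBL.degW w.1

end RBWord

variable (k : Type v) [CommRing k] (X : Type u)

/-- The free `k`-module `kX_∞` on the Rota-Baxter bracketed words. -/
abbrev RBMod : Type max u v := RBWord X →₀ k

variable {X}

/-- A Rota-Baxter bracketed word viewed as a basis element of `kX_∞`. -/
noncomputable def sing (w : RBWord X) : RBMod k X := Finsupp.single w 1

variable (X)

/-- The Rota-Baxter operator `P` on `kX_∞`, sending a basis word `w` to `⌊w⌋`. -/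
noncomputable def Pop : RBMod k X →ₗ[k] RBMod k X :=
  Finsupp.lmapDomain k k fun w => (⟨[RBL.br w.1], RBL.wordValid_br w.2⟩ : RBWord X)

/-- Concatenation on the left by `u₀` and on the right by `v₀`, as a linear map on `kX_∞`
(sending basis words whose concatenation is not valid to `0`; in all uses below
the concatenations are valid). -/
noncomputable def concatLR (u₀ v₀ : List (RBL X)) : RBMod k X →ₗ[k] RBMod k X :=
  Finsupp.lsum k fun w =>
    letI := Classical.dec (RBL.wordValid (u₀ ++ w.1 ++ v₀))
    if h : RBL.wordValid (u₀ ++ w.1 ++ v₀) then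
      Finsupp.lsingle (⟨u₀ ++ w.1 ++ v₀, h⟩ : RBWord X) else 0

/-- The counit `ε : kX_∞ → k`, `ε(1) = 1` and `ε(w) = 0` for basis words `w ≠ 1`. -/
noncomputable def eps : RBMod k X →ₗ[k] k := Finsupp.lapply RBWord.one

/-- The homogeneous component `H^(n)` of `kX_∞`: the span of the basis words of total
degree `n`. -/
noncomputable def Hdeg (n : ℕ) : Submodule k (RBMod k X) :=
  Finsupp.supported k k {w : RBWord X | w.deg = n}

variable (lam : k)

/-- The data of the product `⋄` on the free Rota-Baxter algebra `kX_∞` of weight `lam`,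
together with its recursive defining equations:
* if the concatenation of `u` and `v` is again a Rota-Baxter bracketed word (in particular
  if `u` or `v` is empty, or if the last letter of `u` or the first letter of `v` is a
  variable), then `u ⋄ v` is the concatenation `uv`;
* if `u = u₀⌊ā⌋` and `v = ⌊b̄⌋v₀`, then
  `u ⋄ v = u₀(⌊⌊ā⌋ ⋄ b̄⌋ + ⌊ā ⋄ ⌊b̄⌋⌋ + λ⌊ā ⋄ b̄⌋)v₀`. -/
structure FreeRBAData where
  /-- the product `⋄`, as a `k`-bilinear map -/
  d : RBMod k X →ₗ[k] RBMod k X →ₗ[k] RBMod k X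
  d_concat : ∀ (u v : RBWord X) (h : RBL.wordValid (u.1 ++ v.1)),
    d (sing k u) (sing k v) = sing k ⟨u.1 ++ v.1, h⟩
  d_br : ∀ (u₀ v₀ : List (RBL X)) (a b : RBWord X)
    (hu : RBL.wordValid (u₀ ++ [RBL.br a.1])) (hv : RBL.wordValid (RBL.br b.1 :: v₀)),
    d (sing k ⟨u₀ ++ [RBL.br a.1], hu⟩) (sing k ⟨RBL.br b.1 :: v₀, hv⟩)
      = concatLR k X u₀ v₀
          (Pop k X (d (Pop k X (sing k a)) (sing k b))
            + Pop k X (d (sing k a) (Pop k X (sing k b)))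
            + lam • Pop k X (d (sing k a) (sing k b)))

namespace FreeRBAData

variable {k X lam}

/-- The componentwise product `⋄ ⊗ ⋄` on `kX_∞ ⊗ kX_∞`. -/
noncomputable def mulT (D : FreeRBAData k X lam) :
    (RBMod k X ⊗[k] RBMod k X) →ₗ[k] (RBMod k X ⊗[k] RBMod k X) →ₗ[k]
      (RBMod k X ⊗[k] RBMod k X) :=
  TensorProduct.map₂ D.d D.d

end FreeRBAData

/-- The free Rota-Baxter algebra `kX_∞` of weight `lam` together with the coproduct `Δ`,
characterized by its recursive defining equations:
`Δ(1) = 1 ⊗ 1`, `Δ(x) = x ⊗ 1 + 1 ⊗ x` for `x ∈ X`,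
`Δ(⌊w⌋) = ⌊w⌋ ⊗ 1 + (id ⊗ P)Δ(w)`, and
`Δ(w₁ ⋄ ⋯ ⋄ w_m) = Δ(w₁) ⋄ ⋯ ⋄ Δ(w_m)` for the `⋄`-factorization of a word into its
(alternating) sequence of letters. -/
structure FreeRBBialgData extends FreeRBAData k X lam where
  /-- the coproduct `Δ` -/
  Dl : RBMod k X →ₗ[k] (RBMod k X ⊗[k] RBMod k X)
  Dl_one : Dl (sing k RBWord.one) = sing k RBWord.one ⊗ₜ[k] sing k RBWord.one
  Dl_var : ∀ (x : X),
    Dl (sing k ⟨[RBL.var x], RBL.wordValid_var x⟩)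
      = sing k ⟨[RBL.var x], RBL.wordValid_var x⟩ ⊗ₜ[k] sing k RBWord.one
        + sing k RBWord.one ⊗ₜ[k] sing k ⟨[RBL.var x], RBL.wordValid_var x⟩
  Dl_br : ∀ w : RBWord X,
    Dl (Pop k X (sing k w))
      = Pop k X (sing k w) ⊗ₜ[k] sing k RBWord.one
        + TensorProduct.map LinearMap.id (Pop k X) (Dl (sing k w))
  Dl_cons : ∀ (a : RBL X) (l : List (RBL X)) (h : RBL.wordValid (a :: l))
    (ha : RBL.wordValid [a]) (hl : RBL.wordValid l), l ≠ [] →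
    Dl (sing k ⟨a :: l, h⟩)
      = TensorProduct.map₂ d d (Dl (sing k ⟨[a], ha⟩)) (Dl (sing k ⟨l, hl⟩))

namespace RBL

variable {X : Type u}

lemma wordValid_map_var (s : List X) : wordValid (s.map RBL.var) := by
  induction s with
  | nil => exact wordValid_nil
  | cons a t ih =>
    cases t with
    | nil => exact wordValid_var a
    | cons b t' =>
      simp only [List.map_cons] at ih ⊢
      exact ⟨by simp [valid], by simp [isBr], ih⟩

end RBL

variable {X}

/-- The word `x₁ ⋯ x_m ∈ M(X)` as a basis element of `kX_∞`. -/
noncomputable def varWord (s : List X) : RBMod k X :=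
  sing k ⟨s.map RBL.var, RBL.wordValid_map_var s⟩

/-- A letter in `X ∪ ⌊X_∞⌋`, viewed as a basis element of `kX_∞` (invalid letters are
sent to `0`; they do not occur below). -/
noncomputable def letterMod (a : RBL X) : RBMod k X :=
  letI := Classical.dec (RBL.wordValid [a])
  if h : RBL.wordValid [a] then sing k ⟨[a], h⟩ else 0

variable (X)

/-- The tensor product `H^(p) ⊗ H^(q)` of homogeneous components, as a submodule of
`kX_∞ ⊗ kX_∞`. -/
noncomputable def HdegT (p q : ℕ) : Submodule k (RBMod k X ⊗[k] RBMod k X) :=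
  Submodule.map₂ (TensorProduct.mk k (RBMod k X) (RBMod k X)) (Hdeg k X p) (Hdeg k X q)

namespace FreeRBAData

variable {k X lam}

/-- The `⋄`-product `w₁ ⋄ (w₂ ⋄ (⋯ ⋄ (w_m ⋄ 1)))` of a sequence of letters. -/
noncomputable def prodList (D : FreeRBAData k X lam) (l : List (RBL X)) : RBMod k X :=
  l.foldr (fun a acc => D.d (letterMod k a) acc) (sing k RBWord.one)

end FreeRBAData

/-! In weight zero the rewriting rule `⌊ā⌋ ⋄ ⌊b̄⌋ = ⌊⌊ā⌋ ⋄ b̄⌋ + ⌊ā ⋄ ⌊b̄⌋⌋` keeps the total degree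
(each term carries the two brackets of the left-hand side), so by induction on the degree the
product `⋄` is graded. The coproduct is then graded by induction on the degree of a word: each
defining equation of `Δ` expresses `Δ(w)` through `Δ` of words of smaller degree, the operator
`id ⊗ P` raising the degree by one, and the graded product `⋄ ⊗ ⋄`. -/

namespace RBL

variable {X : Type u}

lemma degW_append (l l' : List (RBL X)) : degW (l ++ l') = degW l + degW l' := by
  induction l with
  | nil => simp [degW]
  | cons a t ih => simp [degW, ih, Nat.add_assoc]

lemma degL_pos (a : RBL X) : 0 < degL a := by
  cases a <;> simp [degL]

lemma wordValid_singleton {a : RBL X} : wordValid [a] ↔ valid a := by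
  simp [wordValid]

lemma valid_of_wordValid_cons {a : RBL X} {l : List (RBL X)} (h : wordValid (a :: l)) :
    valid a := by
  cases l with
  | nil => exact wordValid_singleton.1 h
  | cons b t => exact h.1

lemma wordValid_of_wordValid_cons {a : RBL X} {l : List (RBL X)} (h : wordValid (a :: l)) :
    wordValid l := by
  cases l with
  | nil => exact wordValid_nil
  | cons b t => exact h.2.2

lemma valid_of_wordValid_append_singleton {l : List (RBL X)} {a : RBL X}
    (h : wordValid (l ++ [a])) : valid a := by
  induction l with
  | nil => exact wordValid_singleton.1 h
  | cons b t ih => exact ih (wordValid_of_wordValid_cons h)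

lemma wordValid_append {l l' : List (RBL X)} (hl : wordValid l) (hl' : wordValid l')
    (h : ∀ a ∈ l.getLast?, ∀ b ∈ l'.head?, ¬(a.isBr = true ∧ b.isBr = true)) :
    wordValid (l ++ l') := by
  induction l with
  | nil => exact hl'
  | cons a t ih =>
    cases t with
    | nil =>
      cases l' with
      | nil => exact hl
      | cons b t' => exact ⟨wordValid_singleton.1 hl, h a (by simp) b (by simp), hl'⟩
    | cons c t =>
      refine ⟨hl.1, hl.2.1, ih hl.2.2 fun a' ha' => h a' ?_⟩
      rwa [List.getLast?_cons_cons]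

end RBL

namespace RBWord

variable {X : Type u}

def bracket (w : RBWord X) : RBWord X := ⟨[RBL.br w.1], RBL.wordValid_br w.2⟩

lemma deg_bracket (w : RBWord X) : w.bracket.deg = w.deg + 1 := by
  simp [bracket, deg, RBL.degW, RBL.degL]

lemma wordValid_append_or_eq_bracket (u v : RBWord X) :
    RBL.wordValid (u.1 ++ v.1) ∨
      ∃ (u₀ v₀ : List (RBL X)) (a b : RBWord X) (hu : RBL.wordValid (u₀ ++ [RBL.br a.1]))
        (hv : RBL.wordValid (RBL.br b.1 :: v₀)), u = ⟨_, hu⟩ ∧ v = ⟨_, hv⟩ := by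
  obtain ⟨ul, hu⟩ := u
  obtain ⟨vl, hv⟩ := v
  rcases List.eq_nil_or_concat' ul with rfl | ⟨u₀, c, rfl⟩
  · exact Or.inl hv
  rcases vl with _ | ⟨d, v₀⟩
  · exact Or.inl (by simpa using hu)
  match c, d with
  | RBL.br la, RBL.br lb =>
    exact Or.inr ⟨u₀, v₀, ⟨la, RBL.valid_of_wordValid_append_singleton hu⟩,
      ⟨lb, RBL.valid_of_wordValid_cons hv⟩, hu, hv, rfl, rfl⟩
  | RBL.var _, _ | RBL.br _, RBL.var _ =>
    exact Or.inl (RBL.wordValid_append hu hv (by simp [RBL.isBr]))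

end RBWord

section Grading

variable {k X}

lemma sing_mem_Hdeg {n : ℕ} {w : RBWord X} (h : w.deg = n) : sing k w ∈ Hdeg k X n :=
  Finsupp.single_mem_supported k 1 h

lemma map_mem_of_mem_Hdeg {M : Type*} [AddCommMonoid M] [Module k M] {n : ℕ}
    (f : RBMod k X →ₗ[k] M) {S : Submodule k M}
    (h : ∀ w : RBWord X, w.deg = n → f (sing k w) ∈ S) {g : RBMod k X}
    (hg : g ∈ Hdeg k X n) : f g ∈ S := by
  suffices Hdeg k X n ≤ S.comap f from this hg
  rw [Hdeg, Finsupp.supported_eq_span_single, Submodule.span_le]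
  rintro _ ⟨w, hw, rfl⟩
  exact h w hw

lemma Pop_sing (w : RBWord X) : Pop k X (sing k w) = sing k w.bracket :=
  Finsupp.mapDomain_single

lemma Pop_mem_Hdeg {n : ℕ} {f : RBMod k X} (hf : f ∈ Hdeg k X n) :
    Pop k X f ∈ Hdeg k X (n + 1) :=
  map_mem_of_mem_Hdeg (Pop k X) (fun w hw => by
    rw [Pop_sing]
    exact sing_mem_Hdeg (by rw [RBWord.deg_bracket, hw])) hf

lemma concatLR_mem_Hdeg (u₀ v₀ : List (RBL X)) {n : ℕ} {f : RBMod k X}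
    (hf : f ∈ Hdeg k X n) :
    concatLR k X u₀ v₀ f ∈ Hdeg k X (RBL.degW u₀ + n + RBL.degW v₀) := by
  refine map_mem_of_mem_Hdeg (concatLR k X u₀ v₀) (fun w hw => ?_) hf
  rw [concatLR, sing, Finsupp.lsum_single]
  split_ifs with h
  · exact sing_mem_Hdeg (by simp [RBWord.deg, RBL.degW_append, ← hw, Nat.add_assoc])
  · exact zero_mem _

/-- Weight zero matters here: the term `λ⌊ā ⋄ b̄⌋` of the rewriting rule has degree one less. -/
lemma FreeRBAData.d_sing_mem_Hdeg (D : FreeRBAData k X (0 : k)) (u v : RBWord X) :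
    D.d (sing k u) (sing k v) ∈ Hdeg k X (u.deg + v.deg) := by
  rcases RBWord.wordValid_append_or_eq_bracket u v with h | ⟨u₀, v₀, a, b, hu, hv, rfl, rfl⟩
  · rw [D.d_concat u v h]
    exact sing_mem_Hdeg (by simp [RBWord.deg, RBL.degW_append])
  have left : D.d (sing k a.bracket) (sing k b) ∈ Hdeg k X (a.deg + 1 + b.deg) := by
    simpa only [RBWord.deg_bracket] using D.d_sing_mem_Hdeg a.bracket b
  have right : D.d (sing k a) (sing k b.bracket) ∈ Hdeg k X (a.deg + 1 + b.deg) := by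
    have := D.d_sing_mem_Hdeg a b.bracket
    rwa [RBWord.deg_bracket, ← Nat.add_assoc, Nat.add_right_comm] at this
  rw [D.d_br, zero_smul, add_zero, Pop_sing, Pop_sing, ← map_add]
  convert concatLR_mem_Hdeg u₀ v₀ (Pop_mem_Hdeg (add_mem left right)) using 2
  simp only [RBWord.deg, RBL.degW, RBL.degW_append, RBL.degL]
  omega
termination_by u.deg + v.deg
decreasing_by
  all_goals
    subst_vars
    simp only [RBWord.deg_bracket]
    simp only [RBWord.deg, RBL.degW, RBL.degW_append, RBL.degL]
    omega

lemma FreeRBAData.d_mem_Hdeg (D : FreeRBAData k X (0 : k)) {p q : ℕ} {f g : RBMod k X}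
    (hf : f ∈ Hdeg k X p) (hg : g ∈ Hdeg k X q) : D.d f g ∈ Hdeg k X (p + q) :=
  map_mem_of_mem_Hdeg (D.d.flip g) (fun u hu =>
    map_mem_of_mem_Hdeg (D.d (sing k u)) (fun v hv => hu ▸ hv ▸ D.d_sing_mem_Hdeg u v) hg) hf

variable (k X) in
noncomputable def tensorDeg (n : ℕ) : Submodule k (RBMod k X ⊗[k] RBMod k X) :=
  ⨆ (p : ℕ) (q : ℕ) (_ : p + q = n), HdegT k X p q

lemma tmul_mem_tensorDeg {p q n : ℕ} {x y : RBMod k X} (hx : x ∈ Hdeg k X p)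
    (hy : y ∈ Hdeg k X q) (h : p + q = n) : x ⊗ₜ[k] y ∈ tensorDeg k X n := by
  have : HdegT k X p q ≤ tensorDeg k X n := le_iSup₂_of_le p q (le_iSup_of_le h le_rfl)
  exact this (Submodule.apply_mem_map₂ _ hx hy)

lemma map_mem_of_mem_tensorDeg {M : Type*} [AddCommMonoid M] [Module k M] {n : ℕ}
    (f : RBMod k X ⊗[k] RBMod k X →ₗ[k] M) {S : Submodule k M}
    (h : ∀ p q, p + q = n → ∀ x ∈ Hdeg k X p, ∀ y ∈ Hdeg k X q, f (x ⊗ₜ[k] y) ∈ S)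
    {t : RBMod k X ⊗[k] RBMod k X} (ht : t ∈ tensorDeg k X n) : f t ∈ S := by
  suffices tensorDeg k X n ≤ S.comap f from this ht
  exact iSup_le fun p => iSup_le fun q => iSup_le fun hpq =>
    Submodule.map₂_le.2 fun x hx y hy => h p q hpq x hx y hy

lemma map_id_Pop_mem_tensorDeg {n : ℕ} {t : RBMod k X ⊗[k] RBMod k X}
    (ht : t ∈ tensorDeg k X n) :
    TensorProduct.map LinearMap.id (Pop k X) t ∈ tensorDeg k X (n + 1) :=
  map_mem_of_mem_tensorDeg _ (fun _ _ hpq _ hx _ hy =>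
    tmul_mem_tensorDeg hx (Pop_mem_Hdeg hy) (by omega)) ht

lemma map₂_mem_tensorDeg {d : RBMod k X →ₗ[k] RBMod k X →ₗ[k] RBMod k X}
    (hd : ∀ {p q : ℕ} {f g : RBMod k X}, f ∈ Hdeg k X p → g ∈ Hdeg k X q →
      d f g ∈ Hdeg k X (p + q))
    {m n : ℕ} {t t' : RBMod k X ⊗[k] RBMod k X}
    (ht : t ∈ tensorDeg k X m) (ht' : t' ∈ tensorDeg k X n) :
    TensorProduct.map₂ d d t t' ∈ tensorDeg k X (m + n) :=
  map_mem_of_mem_tensorDeg ((TensorProduct.map₂ d d).flip t') (fun p q hpq x hx y hy =>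
    map_mem_of_mem_tensorDeg (TensorProduct.map₂ d d (x ⊗ₜ[k] y))
      (fun p' q' hpq' x' hx' y' hy' => by
        rw [TensorProduct.map₂_apply_tmul]
        exact tmul_mem_tensorDeg (hd hx hx') (hd hy hy') (by omega)) ht') ht

lemma FreeRBBialgData.Dl_sing_mem_tensorDeg (D : FreeRBBialgData k X (0 : k))
    (w : RBWord X) : D.Dl (sing k w) ∈ tensorDeg k X w.deg := by
  have one_mem : sing k (RBWord.one : RBWord X) ∈ Hdeg k X 0 := sing_mem_Hdeg rfl
  obtain ⟨l, hw⟩ := w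
  match l, hw with
  | [], _ => exact D.Dl_one ▸ tmul_mem_tensorDeg one_mem one_mem rfl
  | [RBL.var x], _ =>
    have hx : sing k ⟨[RBL.var x], RBL.wordValid_var x⟩ ∈ Hdeg k X 1 := sing_mem_Hdeg rfl
    show D.Dl (sing k ⟨[RBL.var x], RBL.wordValid_var x⟩) ∈ tensorDeg k X 1
    rw [D.Dl_var]
    exact add_mem (tmul_mem_tensorDeg hx one_mem rfl) (tmul_mem_tensorDeg one_mem hx rfl)
  | [RBL.br l], hw =>
    let w : RBWord X := ⟨l, RBL.wordValid_singleton.1 hw⟩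
    rw [show (⟨[RBL.br l], hw⟩ : RBWord X) = w.bracket from rfl, ← Pop_sing, D.Dl_br,
      RBWord.deg_bracket]
    exact add_mem (tmul_mem_tensorDeg (Pop_mem_Hdeg (sing_mem_Hdeg rfl)) one_mem rfl)
      (map_id_Pop_mem_tensorDeg (D.Dl_sing_mem_tensorDeg w))
  | a :: b :: t, hw =>
    have ha := RBL.wordValid_singleton.2 (RBL.valid_of_wordValid_cons hw)
    have hl := RBL.wordValid_of_wordValid_cons hw
    rw [D.Dl_cons a (b :: t) hw ha hl (List.cons_ne_nil b t)]
    exact map₂_mem_tensorDeg D.d_mem_Hdeg (D.Dl_sing_mem_tensorDeg ⟨[a], ha⟩)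
      (D.Dl_sing_mem_tensorDeg ⟨b :: t, hl⟩)
termination_by w.deg
decreasing_by
  · simp [RBWord.deg, RBL.degW, RBL.degL]
  · have := RBL.degL_pos b
    simp only [RBWord.deg, RBL.degW]
    omega
  · have := RBL.degL_pos a
    simp only [RBWord.deg, RBL.degW]
    omega

end Grading

/-- In the free Rota-Baxter algebra of weight zero, the coproduct `Δ`
respects the total degree grading: `Δ(H^(n)) ⊆ ⊕_{p+q=n} H^(p) ⊗ H^(q)` for all `n ≥ 0`. -/
theorem coproduct_respects_grading_weight_zero
    {k : Type v} [CommRing k] {X : Type u} (D : FreeRBBialgData k X (0 : k))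
    (n : ℕ) (f : RBMod k X) (hf : f ∈ Hdeg k X n) :
    D.Dl f ∈ ⨆ (p : ℕ) (q : ℕ) (_ : p + q = n), HdegT k X p q :=
  map_mem_of_mem_Hdeg D.Dl (fun w hw => hw ▸ D.Dl_sing_mem_tensorDeg w) hf
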